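/- Let the systems u_{n+1} = A_n u_n and v_{n+1} = Ã_n v_n be kinematically similar via transformations Q_n ∈ GL(ℝ^d), i.e. Ã_n = Q_{n+1} A_n Q_n^{-1}. Then the outer angular spectra of dimension s of the two systems coincide, Σ_s(Φ) = Σ_s(Φ̃), in each of the following two cases: (i) Q_n = q_n I with scalars q_n ≠ 0 for all n ∈ ℕ₀; (ii) the limit Q = lim_{n→∞} Q_n exists and is an orthogonal matrix. Moreover, in these cases the four outer angular values of the two systems agree as well. -/

import Mathlib

/-!
Since `Φ̃(n,0) = Q_n Φ(n,0) Q_0⁻¹`, the `j`-th angle in `α̃_n(V)` is the angle between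
`Q_j X_j` and `Q_{j+1} X_{j+1}`, where `X_j = Φ(j,0) Q_0⁻¹ V` are the subspaces whose successive
angles make up `α_n(Q_0⁻¹ V)`. In case (i) every `Q_j` fixes every subspace, so the two angle
sequences coincide. In case (ii) write `Q_j = Q R_j` with `Q` an isometry and `R_j → I`: angles
are invariant under `Q`, and perturbing both subspaces by `R_j, R_{j+1}` moves the cosine of the
maximal angle by `O(‖R_j - I‖ + ‖R_{j+1} - I‖)`, so the angle terms differ by `o(1)` and, by
Cesàro, `α̃_n(V) - α_n(Q_0⁻¹ V) → 0`. In both cases `V ↦ Q_0⁻¹ V` is a bijection of `G(s,d)`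
preserving the `liminf` and `limsup` of the averages, whence all five invariants agree.
-/

open scoped RealInnerProductSpace ENNReal
open Filter

noncomputable section

/-- `d`-dimensional Euclidean space `ℝ^d`. -/
abbrev Euc (d : ℕ) := EuclideanSpace ℝ (Fin d)

/-- Bounded linear operators on `ℝ^d` (i.e. `d × d` matrices, with the operator norm). -/
abbrev Op (d : ℕ) := Euc d →L[ℝ] Euc d

/-- The maximal principal angle between two subspaces of `ℝ^d`,
`∠(V,W) = arccos( min_{v ∈ V, ‖v‖=1} max_{w ∈ W, ‖w‖=1} vᵀw )`. -/
def subAngle {d : ℕ} (V W : Submodule ℝ (Euc d)) : ℝ :=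
  Real.arccos (sInf {x : ℝ | ∃ v ∈ V, ‖v‖ = 1 ∧
    x = sSup {y : ℝ | ∃ w ∈ W, ‖w‖ = 1 ∧ y = ⟪v, w⟫}})

/-- The solution operator `Φ(n,0) = A_{n-1} ⋯ A_0` of the system `u_{n+1} = A_n u_n`. -/
def PhiN {d : ℕ} (A : ℕ → Euc d ≃L[ℝ] Euc d) : ℕ → Euc d ≃L[ℝ] Euc d
  | 0 => ContinuousLinearEquiv.refl ℝ (Euc d)
  | n + 1 => (PhiN A n).trans (A n)

/-- The average of principal angles between successive subspaces,
`α_n(V) = (1/n) Σ_{j=1}^n ∠(Φ(j-1,0)V, Φ(j,0)V)`. -/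
def alphaAvg {d : ℕ} (A : ℕ → Euc d ≃L[ℝ] Euc d)
    (V : Submodule ℝ (Euc d)) (n : ℕ) : ℝ :=
  (n : ℝ)⁻¹ * ∑ j ∈ Finset.range n,
    subAngle (V.map ((PhiN A j : Op d) : Euc d →ₗ[ℝ] Euc d))
      (V.map ((PhiN A (j + 1) : Op d) : Euc d →ₗ[ℝ] Euc d))

/-- Outer angular value `θ_s^{sup,limsup} = sup_{V ∈ G(s,d)} limsup_n α_n(V)`. -/
def thSupLimsup {d : ℕ} (A : ℕ → Euc d ≃L[ℝ] Euc d) (s : ℕ) : ℝ :=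
  sSup {x : ℝ | ∃ V : Submodule ℝ (Euc d), Module.finrank ℝ V = s ∧
    x = limsup (alphaAvg A V) atTop}

/-- Outer angular value `θ_s^{sup,liminf} = sup_{V ∈ G(s,d)} liminf_n α_n(V)`. -/
def thSupLiminf {d : ℕ} (A : ℕ → Euc d ≃L[ℝ] Euc d) (s : ℕ) : ℝ :=
  sSup {x : ℝ | ∃ V : Submodule ℝ (Euc d), Module.finrank ℝ V = s ∧
    x = liminf (alphaAvg A V) atTop}

/-- Outer angular value `θ_s^{inf,limsup} = inf_{V ∈ G(s,d)} limsup_n α_n(V)`. -/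
def thInfLimsup {d : ℕ} (A : ℕ → Euc d ≃L[ℝ] Euc d) (s : ℕ) : ℝ :=
  sInf {x : ℝ | ∃ V : Submodule ℝ (Euc d), Module.finrank ℝ V = s ∧
    x = limsup (alphaAvg A V) atTop}

/-- Outer angular value `θ_s^{inf,liminf} = inf_{V ∈ G(s,d)} liminf_n α_n(V)`. -/
def thInfLiminf {d : ℕ} (A : ℕ → Euc d ≃L[ℝ] Euc d) (s : ℕ) : ℝ :=
  sInf {x : ℝ | ∃ V : Submodule ℝ (Euc d), Module.finrank ℝ V = s ∧
    x = liminf (alphaAvg A V) atTop}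

/-- The outer angular spectrum of dimension `s`:
`Σ_s = cl{θ ∈ [0,π/2] : ∃ V ∈ G(s,d), liminf α_n(V) ≤ θ ≤ limsup α_n(V)}`. -/
def angSpecN {d : ℕ} (A : ℕ → Euc d ≃L[ℝ] Euc d) (s : ℕ) : Set ℝ :=
  closure {θ : ℝ | 0 ≤ θ ∧ θ ≤ Real.pi / 2 ∧
    ∃ V : Submodule ℝ (Euc d), Module.finrank ℝ V = s ∧
      liminf (alphaAvg A V) atTop ≤ θ ∧ θ ≤ limsup (alphaAvg A V) atTop}

open NormedSpace Topology

section NormedSpace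

variable {E : Type*} [NormedAddCommGroup E] [NormedSpace ℝ E]

local notation "lin[" F "]" => ((F : E →L[ℝ] E) : E →ₗ[ℝ] E)

def UnitSphereWithin (V W : Submodule ℝ E) (δ : ℝ) : Prop :=
  ∀ v ∈ V, ‖v‖ = 1 → ∃ w ∈ W, ‖w‖ = 1 ∧ ‖v - w‖ ≤ δ

lemma UnitSphereWithin.mono {V W : Submodule ℝ E} {δ δ' : ℝ} (h : UnitSphereWithin V W δ)
    (hδ : δ ≤ δ') : UnitSphereWithin V W δ' :=
  fun v hv hv1 => (h v hv hv1).imp fun _ ⟨hw, hw1, hvw⟩ => ⟨hw, hw1, hvw.trans hδ⟩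

lemma norm_sub_normalize {u : E} (hu : u ≠ 0) : ‖u - normalize u‖ = |‖u‖ - 1| := by
  have h : u - normalize u = (‖u‖ - 1) • normalize u := by
    rw [sub_smul, one_smul, norm_smul_normalize]
  rw [h, norm_smul, norm_normalize hu, mul_one, Real.norm_eq_abs]

lemma unitSphereWithin_map {R : E ≃L[ℝ] E} {δ : ℝ} (hR : ‖(R : E →L[ℝ] E) - 1‖ ≤ δ)
    (hδ : δ < 1) (V : Submodule ℝ E) : UnitSphereWithin V (V.map lin[R]) (2 * δ) := by
  intro v hv hv1
  have hRv : ‖v - R v‖ ≤ δ := by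
    simpa [hv1, norm_sub_rev] using ((R : E →L[ℝ] E) - 1).le_of_opNorm_le hR v
  have hRv1 : |‖R v‖ - 1| ≤ δ := calc
    |‖R v‖ - 1| = |‖R v‖ - ‖v‖| := by rw [hv1]
    _ ≤ ‖R v - v‖ := abs_norm_sub_norm_le (R v) v
    _ ≤ δ := by rwa [norm_sub_rev]
  have hRv0 : R v ≠ 0 := fun h => by
    rw [h, norm_zero, zero_sub, abs_neg, abs_one] at hRv1
    linarith
  refine ⟨normalize (R v), Submodule.smul_mem _ _ (Submodule.mem_map_of_mem hv),
    norm_normalize hRv0, ?_⟩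
  calc ‖v - normalize (R v)‖ ≤ ‖v - R v‖ + ‖R v - normalize (R v)‖ :=
        norm_sub_le_norm_sub_add_norm_sub _ _ _
    _ ≤ δ + δ := by
        rw [norm_sub_normalize hRv0]
        exact add_le_add hRv hRv1
    _ = 2 * δ := by ring

lemma norm_symm_sub_one_le {R : E ≃L[ℝ] E} {δ : ℝ} (hR : ‖(R : E →L[ℝ] E) - 1‖ ≤ δ)
    (hδ : δ ≤ 1 / 2) : ‖((R.symm : E ≃L[ℝ] E) : E →L[ℝ] E) - 1‖ ≤ 2 * δ := by
  have hδ0 : 0 ≤ δ := (norm_nonneg _).trans hR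
  refine ContinuousLinearMap.opNorm_le_bound _ (by linarith) fun y => ?_
  set x := R.symm y
  -- `‖x - y‖ = ‖(R - 1) x‖ ≤ δ ‖x‖ ≤ δ (‖y‖ + ‖x - y‖)`, and `δ ≤ 1/2`
  have hxy : ‖x - y‖ ≤ δ * ‖x‖ := by
    simpa [x, norm_sub_rev] using ((R : E →L[ℝ] E) - 1).le_of_opNorm_le hR x
  have hx : ‖x‖ ≤ ‖y‖ + ‖x - y‖ := norm_le_norm_add_norm_sub' x y
  have : ‖x - y‖ ≤ 2 * δ * ‖y‖ := by nlinarith [norm_nonneg y, norm_nonneg (x - y)]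
  simpa [x] using this

lemma map_symm_map (R : E ≃L[ℝ] E) (V : Submodule ℝ E) :
    (V.map lin[R]).map lin[R.symm] = V := by
  ext x
  simp

lemma unitSphereWithin_map_symm {R : E ≃L[ℝ] E} {δ : ℝ} (hR : ‖(R : E →L[ℝ] E) - 1‖ ≤ δ)
    (hδ : δ < 1 / 2) (V : Submodule ℝ E) : UnitSphereWithin (V.map lin[R]) V (4 * δ) := by
  have h := unitSphereWithin_map (norm_symm_sub_one_le hR hδ.le) (by linarith) (V.map lin[R])
  rw [map_symm_map] at h
  exact h.mono (by linarith)

lemma map_eq_self_of_eq_smul_one {F : E ≃L[ℝ] E} {c : ℝ} (hc : c ≠ 0)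
    (hF : (F : E →L[ℝ] E) = c • 1) (W : Submodule ℝ E) : W.map lin[F] = W := by
  rw [hF, ContinuousLinearMap.toLinearMap_smul, Submodule.map_smul _ _ _ hc,
    ContinuousLinearMap.toLinearMap_one]
  exact Submodule.map_id W

lemma exists_linearIsometryEquiv_comp_tendsto_one [FiniteDimensional ℝ E] {ι : Type*}
    {l : Filter ι} {Q : ι → E ≃L[ℝ] E} {Qlim : E →L[ℝ] E}
    (hQ : Tendsto (fun i => (Q i : E →L[ℝ] E)) l (𝓝 Qlim)) (hQlim : ∀ x, ‖Qlim x‖ = ‖x‖) :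
    ∃ (e : E ≃ₗᵢ[ℝ] E) (R : ι → E ≃L[ℝ] E), (∀ i x, Q i x = e (R i x)) ∧
      Tendsto (fun i => (R i : E →L[ℝ] E)) l (𝓝 1) := by
  let e : E ≃ₗᵢ[ℝ] E := LinearIsometry.toLinearIsometryEquiv ⟨Qlim.toLinearMap, hQlim⟩ rfl
  let C : E →L[ℝ] E := e.symm.toContinuousLinearEquiv
  have hC : C * Qlim = 1 := by
    ext x
    exact e.symm_apply_apply x
  refine ⟨e, fun i => (Q i).trans e.symm.toContinuousLinearEquiv,
    fun i x => (e.apply_symm_apply _).symm, ?_⟩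
  have hCQ := hQ.const_mul C
  rw [hC] at hCQ
  exact hCQ.congr fun i => rfl

end NormedSpace

section InnerProduct

variable {E F : Type*} [NormedAddCommGroup E] [InnerProductSpace ℝ E]
  [NormedAddCommGroup F] [InnerProductSpace ℝ F]

local notation "lin[" R "]" => ((R : E →L[ℝ] E) : E →ₗ[ℝ] E)

/-- For closed `W` this is `‖P_W v‖`, so `subAngle V W = arccos (cosAngle V W)` is the largest
principal angle from `V` to `W`. -/
def maxInner (v : E) (W : Submodule ℝ E) : ℝ :=
  sSup {y : ℝ | ∃ w ∈ W, ‖w‖ = 1 ∧ y = ⟪v, w⟫}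

def cosAngle (V W : Submodule ℝ E) : ℝ :=
  sInf {x : ℝ | ∃ v ∈ V, ‖v‖ = 1 ∧ x = maxInner v W}

lemma inner_le_maxInner {v w : E} {W : Submodule ℝ E} (hw : w ∈ W) (hw1 : ‖w‖ = 1) :
    ⟪v, w⟫ ≤ maxInner v W := by
  refine le_csSup ⟨‖v‖, ?_⟩ ⟨w, hw, hw1, rfl⟩
  rintro _ ⟨w', -, hw'1, rfl⟩
  simpa [hw'1] using real_inner_le_norm v w'

lemma maxInner_nonneg (v : E) (W : Submodule ℝ E) : 0 ≤ maxInner v W := by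
  by_cases hW : ∃ w ∈ W, ‖w‖ = 1
  · obtain ⟨w, hw, hw1⟩ := hW
    have h₁ := inner_le_maxInner (v := v) hw hw1
    have h₂ := inner_le_maxInner (v := v) (W.neg_mem hw) (by rwa [norm_neg])
    rw [inner_neg_right] at h₂
    linarith
  · exact Real.sSup_nonneg fun _ ⟨w, hw, hw1, _⟩ => absurd ⟨w, hw, hw1⟩ hW

lemma maxInner_le_norm (v : E) (W : Submodule ℝ E) : maxInner v W ≤ ‖v‖ := by
  refine Real.sSup_le ?_ (norm_nonneg v)
  rintro _ ⟨w, -, hw1, rfl⟩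
  simpa [hw1] using real_inner_le_norm v w

lemma maxInner_le_add_norm_sub (v v' : E) (W : Submodule ℝ E) :
    maxInner v W ≤ maxInner v' W + ‖v - v'‖ := by
  refine Real.sSup_le ?_ (add_nonneg (maxInner_nonneg v' W) (norm_nonneg _))
  rintro _ ⟨w, hw, hw1, rfl⟩
  calc ⟪v, w⟫ = ⟪v', w⟫ + ⟪v - v', w⟫ := by rw [inner_sub_left]; ring
    _ ≤ maxInner v' W + ‖v - v'‖ :=
        add_le_add (inner_le_maxInner hw hw1) (by simpa [hw1] using real_inner_le_norm (v - v') w)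

lemma maxInner_le_of_unitSphereWithin {W₁ W : Submodule ℝ E} {δ : ℝ}
    (h : UnitSphereWithin W₁ W δ) (hδ : 0 ≤ δ) {v : E} (hv : ‖v‖ ≤ 1) :
    maxInner v W₁ ≤ maxInner v W + δ := by
  refine Real.sSup_le ?_ (add_nonneg (maxInner_nonneg v W) hδ)
  rintro _ ⟨w₁, hw₁, hw₁1, rfl⟩
  obtain ⟨w, hw, hw1, hd⟩ := h w₁ hw₁ hw₁1
  have hvd : ⟪v, w₁ - w⟫ ≤ δ := (real_inner_le_norm _ _).trans <| by
    nlinarith [norm_nonneg v, norm_nonneg (w₁ - w)]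
  calc ⟪v, w₁⟫ = ⟪v, w⟫ + ⟪v, w₁ - w⟫ := by rw [inner_sub_right]; ring
    _ ≤ maxInner v W + δ := add_le_add (inner_le_maxInner hw hw1) hvd

lemma cosAngle_nonneg (V W : Submodule ℝ E) : 0 ≤ cosAngle V W :=
  Real.sInf_nonneg fun _ ⟨v, _, _, hx⟩ => hx ▸ maxInner_nonneg v W

lemma cosAngle_le_maxInner {V W : Submodule ℝ E} {v : E} (hv : v ∈ V) (hv1 : ‖v‖ = 1) :
    cosAngle V W ≤ maxInner v W :=
  csInf_le ⟨0, fun _ ⟨v, _, _, hx⟩ => hx ▸ maxInner_nonneg v W⟩ ⟨v, hv, hv1, rfl⟩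

lemma cosAngle_eq_zero_of_not_exists {V : Submodule ℝ E} (hV : ¬∃ v ∈ V, ‖v‖ = 1)
    (W : Submodule ℝ E) : cosAngle V W = 0 := by
  rw [cosAngle, ← Real.sInf_empty]
  congr 1
  refine Set.eq_empty_of_forall_notMem ?_
  rintro _ ⟨v, hv, hv1, -⟩
  exact hV ⟨v, hv, hv1⟩

lemma cosAngle_mem_Icc (V W : Submodule ℝ E) : cosAngle V W ∈ Set.Icc 0 1 := by
  refine ⟨cosAngle_nonneg V W, ?_⟩
  by_cases hV : ∃ v ∈ V, ‖v‖ = 1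
  · obtain ⟨v, hv, hv1⟩ := hV
    exact (cosAngle_le_maxInner hv hv1).trans (hv1 ▸ maxInner_le_norm v W)
  · rw [cosAngle_eq_zero_of_not_exists hV]
    exact zero_le_one

lemma cosAngle_le_of_unitSphereWithin {V V₁ W W₁ : Submodule ℝ E} {δ : ℝ}
    (hV : ∃ v ∈ V, ‖v‖ = 1) (hVV₁ : UnitSphereWithin V V₁ δ) (hW₁W : UnitSphereWithin W₁ W δ) :
    cosAngle V₁ W₁ ≤ cosAngle V W + 2 * δ := by
  obtain ⟨v₀, hv₀, hv₀1⟩ := hV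
  have hδ : 0 ≤ δ := by
    obtain ⟨_, -, -, h⟩ := hVV₁ v₀ hv₀ hv₀1
    exact (norm_nonneg _).trans h
  rw [← sub_le_iff_le_add]
  refine le_csInf ⟨_, v₀, hv₀, hv₀1, rfl⟩ ?_
  rintro _ ⟨v, hv, hv1, rfl⟩
  obtain ⟨v₁, hv₁, hv₁1, hvv₁⟩ := hVV₁ v hv hv1
  have h₁ := cosAngle_le_maxInner (W := W₁) hv₁ hv₁1
  have h₂ := maxInner_le_add_norm_sub v₁ v W₁
  have h₃ := maxInner_le_of_unitSphereWithin hW₁W hδ hv1.le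
  rw [norm_sub_rev] at h₂
  linarith

lemma abs_cosAngle_map_sub_le {R R' : E ≃L[ℝ] E} {δ : ℝ} (hR : ‖(R : E →L[ℝ] E) - 1‖ ≤ δ)
    (hR' : ‖(R' : E →L[ℝ] E) - 1‖ ≤ δ) (hδ : δ < 1 / 2) (V W : Submodule ℝ E) :
    |cosAngle (V.map lin[R]) (W.map lin[R']) - cosAngle V W| ≤ 8 * δ := by
  have hδ0 : 0 ≤ δ := (norm_nonneg _).trans hR
  have hVR := unitSphereWithin_map hR (by linarith) V
  have hRV := unitSphereWithin_map_symm hR hδ V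
  have hWR' := unitSphereWithin_map hR' (by linarith) W
  have hR'W := unitSphereWithin_map_symm hR' hδ W
  by_cases hV : ∃ v ∈ V, ‖v‖ = 1
  · obtain ⟨v, hv, hv1⟩ := hV
    obtain ⟨v₁, hv₁, hv₁1, -⟩ := hVR v hv hv1
    have h₁ := cosAngle_le_of_unitSphereWithin ⟨v, hv, hv1⟩ (hVR.mono (by linarith)) hR'W
    have h₂ := cosAngle_le_of_unitSphereWithin ⟨v₁, hv₁, hv₁1⟩ hRV (hWR'.mono (by linarith))
    rw [abs_sub_le_iff]
    constructor <;> linarith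
  · have hVR' : ¬∃ v ∈ V.map lin[R], ‖v‖ = 1 := fun ⟨v₁, hv₁, hv₁1⟩ =>
      let ⟨v, hv, hv1, _⟩ := hRV v₁ hv₁ hv₁1
      hV ⟨v, hv, hv1⟩
    rw [cosAngle_eq_zero_of_not_exists hV, cosAngle_eq_zero_of_not_exists hVR', sub_zero, abs_zero]
    positivity

lemma tendsto_cosAngle_map_sub {ι : Type*} {l : Filter ι} {R R' : ι → E ≃L[ℝ] E}
    (hR : Tendsto (fun i => (R i : E →L[ℝ] E)) l (𝓝 1))
    (hR' : Tendsto (fun i => (R' i : E →L[ℝ] E)) l (𝓝 1)) (V W : ι → Submodule ℝ E) :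
    Tendsto (fun i => cosAngle ((V i).map lin[R i]) ((W i).map lin[R' i]) - cosAngle (V i) (W i))
      l (𝓝 0) := by
  have hδ : Tendsto (fun i => ‖(R i : E →L[ℝ] E) - 1‖ + ‖(R' i : E →L[ℝ] E) - 1‖) l (𝓝 0) := by
    simpa using (tendsto_iff_norm_sub_tendsto_zero.1 hR).add
      (tendsto_iff_norm_sub_tendsto_zero.1 hR')
  refine squeeze_zero_norm' ?_ (by simpa using hδ.const_mul 8)
  filter_upwards [hδ.eventually (gt_mem_nhds (by norm_num : (0 : ℝ) < 1 / 2))] with i hi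
  exact abs_cosAngle_map_sub_le (le_add_of_nonneg_right (norm_nonneg _))
    (le_add_of_nonneg_left (norm_nonneg _)) hi (V i) (W i)

lemma maxInner_map_linearIsometry (f : E →ₗᵢ[ℝ] F) (v : E) (W : Submodule ℝ E) :
    maxInner (f v) (W.map f.toLinearMap) = maxInner v W := by
  unfold maxInner
  congr 1
  ext y
  constructor
  · rintro ⟨_, ⟨w, hw, rfl⟩, hw1, rfl⟩
    exact ⟨w, hw, by simpa using hw1, by simp⟩
  · rintro ⟨w, hw, hw1, rfl⟩
    exact ⟨f w, ⟨w, hw, rfl⟩, by simpa using hw1, by simp⟩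

lemma cosAngle_map_linearIsometry (f : E →ₗᵢ[ℝ] F) (V W : Submodule ℝ E) :
    cosAngle (V.map f.toLinearMap) (W.map f.toLinearMap) = cosAngle V W := by
  unfold cosAngle
  congr 1
  ext x
  constructor
  · rintro ⟨_, ⟨v, hv, rfl⟩, hv1, rfl⟩
    exact ⟨v, hv, by simpa using hv1, maxInner_map_linearIsometry f v W⟩
  · rintro ⟨v, hv, hv1, rfl⟩
    exact ⟨f v, ⟨v, hv, rfl⟩, by simpa using hv1, (maxInner_map_linearIsometry f v W).symm⟩

end InnerProduct

lemma UniformContinuousOn.tendsto_comp_sub_comp {f : ℝ → ℝ} {s : Set ℝ}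
    (hf : UniformContinuousOn f s) {ι : Type*} {l : Filter ι} {a b : ι → ℝ}
    (ha : ∀ i, a i ∈ s) (hb : ∀ i, b i ∈ s) (h : Tendsto (fun i => a i - b i) l (𝓝 0)) :
    Tendsto (fun i => f (a i) - f (b i)) l (𝓝 0) := by
  have hab : Tendsto (fun i => (a i, b i)) l (uniformity ℝ ⊓ 𝓟 (s ×ˢ s)) := by
    refine tendsto_inf.2 ⟨tendsto_uniformity_iff_dist_tendsto_zero.2 ?_,
      tendsto_principal.2 (Eventually.of_forall fun i => ⟨ha i, hb i⟩)⟩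
    simpa [Real.dist_eq] using h.abs
  have hfab := tendsto_uniformity_iff_dist_tendsto_zero.1 (Tendsto.comp hf hab)
  refine (tendsto_zero_iff_abs_tendsto_zero _).2 ?_
  simpa [Real.dist_eq, Function.comp_def] using hfab

section LimsupLiminf

variable {ι : Type*} {f : Filter ι} [f.NeBot] {u v : ι → ℝ}

lemma limsup_eq_of_tendsto_sub (hv₁ : IsBoundedUnder (· ≤ ·) f v)
    (hv₂ : IsBoundedUnder (· ≥ ·) f v) (h : Tendsto (fun i => u i - v i) f (𝓝 0)) :
    limsup u f = limsup v f := by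
  have hu : u = v + fun i => u i - v i := by ext; simp
  rw [hu]
  apply le_antisymm
  · calc limsup (v + fun i => u i - v i) f ≤ limsup v f + limsup (fun i => u i - v i) f :=
          limsup_add_le hv₂ hv₁ h.isBoundedUnder_ge.isCoboundedUnder_le h.isBoundedUnder_le
      _ = limsup v f := by rw [h.limsup_eq, add_zero]
  · calc limsup v f = limsup v f + liminf (fun i => u i - v i) f := by rw [h.liminf_eq, add_zero]
      _ ≤ limsup (v + fun i => u i - v i) f :=
          le_limsup_add hv₁ hv₂.isCoboundedUnder_le h.isBoundedUnder_le h.isBoundedUnder_ge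

lemma liminf_eq_of_tendsto_sub (hv₁ : IsBoundedUnder (· ≤ ·) f v)
    (hv₂ : IsBoundedUnder (· ≥ ·) f v) (h : Tendsto (fun i => u i - v i) f (𝓝 0)) :
    liminf u f = liminf v f := by
  have hu : u = v + fun i => u i - v i := by ext; simp
  rw [hu]
  apply le_antisymm
  · calc liminf (v + fun i => u i - v i) f ≤ liminf v f + limsup (fun i => u i - v i) f := by
          rw [add_comm, add_comm (liminf v f)]
          exact liminf_add_le h.isBoundedUnder_ge h.isBoundedUnder_le hv₂ hv₁.isCoboundedUnder_ge
      _ = liminf v f := by rw [h.limsup_eq, add_zero]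
  · calc liminf v f = liminf v f + liminf (fun i => u i - v i) f := by rw [h.liminf_eq, add_zero]
      _ ≤ liminf (v + fun i => u i - v i) f :=
          le_liminf_add hv₂ hv₁ h.isBoundedUnder_ge h.isBoundedUnder_le.isCoboundedUnder_ge

end LimsupLiminf

section KinematicSimilarity

variable {d : ℕ}

local notation "lin[" F "]" => ((F : Op d) : Euc d →ₗ[ℝ] Euc d)

lemma subAngle_eq_arccos_cosAngle (V W : Submodule ℝ (Euc d)) :
    subAngle V W = Real.arccos (cosAngle V W) :=
  rfl

lemma finrank_map_equiv (F : Euc d ≃L[ℝ] Euc d) (V : Submodule ℝ (Euc d)) :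
    Module.finrank ℝ (V.map lin[F]) = Module.finrank ℝ V :=
  F.toLinearEquiv.finrank_map_eq V

def stepAngle (A : ℕ → Euc d ≃L[ℝ] Euc d) (V : Submodule ℝ (Euc d)) (j : ℕ) : ℝ :=
  subAngle (V.map lin[PhiN A j]) (V.map lin[PhiN A (j + 1)])

lemma alphaAvg_mem_Icc (A : ℕ → Euc d ≃L[ℝ] Euc d) (V : Submodule ℝ (Euc d)) (n : ℕ) :
    alphaAvg A V n ∈ Set.Icc 0 Real.pi := by
  have hsum : ∑ j ∈ Finset.range n, stepAngle A V j ≤ n * Real.pi :=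
    (Finset.sum_le_card_nsmul _ _ _ fun j _ => Real.arccos_le_pi _).trans_eq (by simp)
  refine ⟨mul_nonneg (by positivity) (Finset.sum_nonneg fun j _ => Real.arccos_nonneg _), ?_⟩
  calc alphaAvg A V n ≤ (n : ℝ)⁻¹ * (n * Real.pi) :=
        mul_le_mul_of_nonneg_left hsum (by positivity)
    _ ≤ Real.pi := by
        rcases eq_or_ne (n : ℝ) 0 with hn | hn
        · simp [hn, Real.pi_nonneg]
        · rw [inv_mul_cancel_left₀ hn]

lemma tendsto_alphaAvg_sub {A B : ℕ → Euc d ≃L[ℝ] Euc d} {V W : Submodule ℝ (Euc d)}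
    (h : Tendsto (fun j => stepAngle A V j - stepAngle B W j) atTop (𝓝 0)) :
    Tendsto (fun n => alphaAvg A V n - alphaAvg B W n) atTop (𝓝 0) := by
  have h' := h.cesaro
  simp only [Finset.sum_sub_distrib, mul_sub] at h'
  exact h'

section Invariants

variable {A At : ℕ → Euc d ≃L[ℝ] Euc d} (T : Euc d ≃L[ℝ] Euc d)
  (h : ∀ V, Tendsto (fun n => alphaAvg At V n -
    alphaAvg A (V.map ((T.symm : Op d) : Euc d →ₗ[ℝ] Euc d)) n) atTop (𝓝 0))
include h

lemma exists_finrank_liminf_limsup_iff (s : ℕ) (P : ℝ → ℝ → Prop) :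
    (∃ V : Submodule ℝ (Euc d), Module.finrank ℝ V = s ∧
        P (liminf (alphaAvg A V) atTop) (limsup (alphaAvg A V) atTop)) ↔
      ∃ V : Submodule ℝ (Euc d), Module.finrank ℝ V = s ∧
        P (liminf (alphaAvg At V) atTop) (limsup (alphaAvg At V) atTop) := by
  have hbdd : ∀ V, IsBoundedUnder (· ≤ ·) atTop (alphaAvg A V) ∧
      IsBoundedUnder (· ≥ ·) atTop (alphaAvg A V) := fun V =>
    ⟨isBoundedUnder_of ⟨_, fun n => (alphaAvg_mem_Icc A V n).2⟩,
      isBoundedUnder_of ⟨_, fun n => (alphaAvg_mem_Icc A V n).1⟩⟩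
  have hlim : ∀ V, liminf (alphaAvg At V) atTop = liminf (alphaAvg A (V.map lin[T.symm])) atTop ∧
      limsup (alphaAvg At V) atTop = limsup (alphaAvg A (V.map lin[T.symm])) atTop := fun V =>
    ⟨liminf_eq_of_tendsto_sub (hbdd _).1 (hbdd _).2 (h V),
      limsup_eq_of_tendsto_sub (hbdd _).1 (hbdd _).2 (h V)⟩
  constructor
  · rintro ⟨V, hV, hP⟩
    refine ⟨V.map lin[T], (finrank_map_equiv T V).trans hV, ?_⟩
    rwa [(hlim _).1, (hlim _).2, map_symm_map]
  · rintro ⟨V, hV, hP⟩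
    refine ⟨V.map lin[T.symm], (finrank_map_equiv T.symm V).trans hV, ?_⟩
    rwa [← (hlim V).1, ← (hlim V).2]

lemma angSpecN_eq_and_outer_values_eq (s : ℕ) :
    angSpecN A s = angSpecN At s ∧
    thSupLimsup A s = thSupLimsup At s ∧
    thSupLiminf A s = thSupLiminf At s ∧
    thInfLimsup A s = thInfLimsup At s ∧
    thInfLiminf A s = thInfLiminf At s := by
  have key := exists_finrank_liminf_limsup_iff T h s
  refine ⟨congrArg closure (Set.ext fun θ => ?_), congrArg sSup (Set.ext fun x => ?_),
    congrArg sSup (Set.ext fun x => ?_), congrArg sInf (Set.ext fun x => ?_),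
    congrArg sInf (Set.ext fun x => ?_)⟩
  · exact and_congr_right' (and_congr_right' (key fun a b => a ≤ θ ∧ θ ≤ b))
  · exact key fun _ b => x = b
  · exact key fun a _ => x = a
  · exact key fun _ b => x = b
  · exact key fun a _ => x = a

end Invariants

section Similarity

variable {A At Q : ℕ → Euc d ≃L[ℝ] Euc d}
  (hAt : ∀ n, At n = ((Q n).symm.trans (A n)).trans (Q (n + 1)))
include hAt

lemma PhiN_conj_apply (n : ℕ) (x : Euc d) : PhiN At n x = Q n (PhiN A n ((Q 0).symm x)) := by
  induction n with
  | zero => simp [PhiN]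
  | succ n ih => simp [PhiN, ih, hAt n]

lemma map_PhiN_conj (V : Submodule ℝ (Euc d)) (n : ℕ) :
    V.map lin[PhiN At n] = ((V.map lin[(Q 0).symm]).map lin[PhiN A n]).map lin[Q n] := by
  rw [← Submodule.map_comp, ← Submodule.map_comp]
  congr 1
  exact LinearMap.ext fun x => PhiN_conj_apply hAt n x

lemma stepAngle_conj (V : Submodule ℝ (Euc d)) (j : ℕ) :
    stepAngle At V j =
      subAngle (((V.map lin[(Q 0).symm]).map lin[PhiN A j]).map lin[Q j])
        (((V.map lin[(Q 0).symm]).map lin[PhiN A (j + 1)]).map lin[Q (j + 1)]) := by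
  rw [stepAngle, map_PhiN_conj hAt, map_PhiN_conj hAt]

lemma stepAngle_conj_of_eq_smul_one {q : ℕ → ℝ} (hq0 : ∀ n, q n ≠ 0)
    (hq : ∀ n, (Q n : Op d) = q n • (1 : Op d)) (V : Submodule ℝ (Euc d)) :
    stepAngle At V = stepAngle A (V.map lin[(Q 0).symm]) := by
  ext j
  rw [stepAngle_conj hAt, map_eq_self_of_eq_smul_one (hq0 j) (hq j),
    map_eq_self_of_eq_smul_one (hq0 (j + 1)) (hq (j + 1))]
  rfl

lemma tendsto_stepAngle_sub_of_tendsto_isometry {Qlim : Op d}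
    (hQ : Tendsto (fun n => (Q n : Op d)) atTop (𝓝 Qlim)) (hQlim : ∀ x, ‖Qlim x‖ = ‖x‖)
    (V : Submodule ℝ (Euc d)) :
    Tendsto (fun j => stepAngle At V j - stepAngle A (V.map lin[(Q 0).symm]) j) atTop (𝓝 0) := by
  obtain ⟨e, R, hQR, hR⟩ := exists_linearIsometryEquiv_comp_tendsto_one hQ hQlim
  set X := fun j => (V.map lin[(Q 0).symm]).map lin[PhiN A j]
  have hmap : ∀ j (W : Submodule ℝ (Euc d)),
      W.map lin[Q j] = (W.map lin[R j]).map e.toLinearIsometry.toLinearMap := fun j W => by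
    rw [← Submodule.map_comp]
    congr 1
    exact LinearMap.ext fun x => hQR j x
  have hcos := tendsto_cosAngle_map_sub hR (hR.comp (tendsto_add_atTop_nat 1)) X fun j => X (j + 1)
  have harccos : UniformContinuousOn Real.arccos (Set.Icc 0 1) :=
    isCompact_Icc.uniformContinuousOn_of_continuous Real.continuous_arccos.continuousOn
  refine (harccos.tendsto_comp_sub_comp (fun _ => cosAngle_mem_Icc _ _)
    (fun _ => cosAngle_mem_Icc _ _) hcos).congr fun j => ?_
  rw [stepAngle_conj hAt, hmap, hmap, subAngle_eq_arccos_cosAngle, cosAngle_map_linearIsometry]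
  rfl

end Similarity

end KinematicSimilarity

theorem statement6_general {d s : ℕ} (A Q : ℕ → Euc d ≃L[ℝ] Euc d)
    (At : ℕ → Euc d ≃L[ℝ] Euc d)
    (hAt : ∀ n : ℕ, At n = ((Q n).symm.trans (A n)).trans (Q (n + 1)))
    (hcase :
      (∃ q : ℕ → ℝ, (∀ n, q n ≠ 0) ∧ ∀ n, (Q n : Op d) = q n • (1 : Op d)) ∨
      (∃ Qlim : Op d, Tendsto (fun n => (Q n : Op d)) atTop (nhds Qlim) ∧
        ∀ x : Euc d, ‖Qlim x‖ = ‖x‖)) :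
    angSpecN A s = angSpecN At s ∧
    thSupLimsup A s = thSupLimsup At s ∧
    thSupLiminf A s = thSupLiminf At s ∧
    thInfLimsup A s = thInfLimsup At s ∧
    thInfLiminf A s = thInfLiminf At s := by
  refine angSpecN_eq_and_outer_values_eq (Q 0) (fun V => tendsto_alphaAvg_sub ?_) s
  rcases hcase with ⟨q, hq0, hq⟩ | ⟨Qlim, hQ, hQlim⟩
  · simp [stepAngle_conj_of_eq_smul_one hAt hq0 hq V]
  · exact tendsto_stepAngle_sub_of_tendsto_isometry hAt hQ hQlim V

/-- invariance of the outer angular spectrum (and of the four outer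
angular values) under kinematic similarity `Ã_n = Q_{n+1} A_n Q_n⁻¹` in the cases
(i) `Q_n = q_n I`, `q_n ≠ 0`, or (ii) `Q_n → Q` with `Q` orthogonal. -/
theorem statement6 {d s : ℕ} (A Q : ℕ → Euc d ≃L[ℝ] Euc d)
    (hbd : ∃ M : ℝ, ∀ n : ℕ, ‖(A n : Op d)‖ ≤ M ∧ ‖((A n).symm : Op d)‖ ≤ M)
    (hs : 1 ≤ s)
    (At : ℕ → Euc d ≃L[ℝ] Euc d)
    (hAt : ∀ n : ℕ, At n = ((Q n).symm.trans (A n)).trans (Q (n + 1)))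
    (hcase :
      (∃ q : ℕ → ℝ, (∀ n, q n ≠ 0) ∧ ∀ n, (Q n : Op d) = q n • (1 : Op d)) ∨
      (∃ Qlim : Op d, Tendsto (fun n => (Q n : Op d)) atTop (nhds Qlim) ∧
        ∀ x : Euc d, ‖Qlim x‖ = ‖x‖)) :
    angSpecN A s = angSpecN At s ∧
    thSupLimsup A s = thSupLimsup At s ∧
    thSupLiminf A s = thSupLiminf At s ∧
    thInfLimsup A s = thInfLimsup At s ∧
    thInfLiminf A s = thInfLiminf At s :=
  statement6_general A Q At hAt hcase
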